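/- Let A, B, a, b be positive integers with a ≤ A, b ≤ B, let G = ℤ_A × ℤ_B and f = 𝟙_{[a]×[b]}. Then the zero set Z(f̂) of the Fourier transform of f does not intersect the difference set Q' − Q', where Q' = [A/gcd(A,a)] × [B/gcd(B,b)] ⊆ G; equivalently, Z(f̂) is disjoint from the set {−(A/gcd(A,a)−1),…,A/gcd(A,a)−1} × {−(B/gcd(B,b)−1),…,B/gcd(B,b)−1} taken mod (A,B). -/

import Mathlib

/-- Fourier transform on `ℤ_A × ℤ_B` of the indicator of the cube `[a] × [b]`. -/
noncomputable def cubeFT (A B a b : ℕ) [NeZero A] [NeZero B] (j : ZMod A) (k : ZMod B) : ℂ :=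
  ∑ x : ZMod A, ∑ y : ZMod B,
    (if x.val < a ∧ y.val < b then (1 : ℂ) else 0) *
      Complex.exp (-(2 * (Real.pi : ℂ) * Complex.I) *
        ((j.val : ℂ) * (x.val : ℂ) / (A : ℂ) + (k.val : ℂ) * (y.val : ℂ) / (B : ℂ)))

/-- The cube `Q' = [A/gcd(A,a)] × [B/gcd(B,b)]` in `ℤ_A × ℤ_B`. -/
def Q' (A B a b : ℕ) [NeZero A] [NeZero B] : Finset (ZMod A × ZMod B) :=
  Finset.univ.filter fun p => p.1.val < A / Nat.gcd A a ∧ p.2.val < B / Nat.gcd B b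

/-!
The transform factors as `F_{A,a}(j) · F_{B,b}(k)` with `F_{N,c}(j) = ∑_{i<c} (ζ_N^j)^i` a geometric
sum in a primitive `N`-th root of unity `ζ_N`. Such a sum vanishes only when `ζ_N^j ≠ 1` but
`ζ_N^{jc} = 1`, i.e. `N ∤ j` and `N ∣ jc`. The latter forces `N / gcd(N, c) ∣ j`, and a difference of
two residues in `[N / gcd(N, c)]` is divisible by `N / gcd(N, c)` only when it is zero.
-/

open Finset Complex
open scoped Real

lemma Nat.div_gcd_dvd_of_dvd_mul {N c d : ℕ} (hN : N ≠ 0) (h : N ∣ d * c) : N / N.gcd c ∣ d := by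
  have hg : 0 < N.gcd c := Nat.gcd_pos_of_pos_left c (Nat.pos_of_ne_zero hN)
  refine (Nat.coprime_div_gcd_div_gcd hg).dvd_of_dvd_mul_right ?_
  rw [← Nat.mul_div_assoc _ (Nat.gcd_dvd_right N c)]
  exact Nat.div_dvd_div (Nat.gcd_dvd_left N c) h

lemma ZMod.eq_of_dvd_val_sub {N m : ℕ} [NeZero N] (hmN : m ∣ N) {p q : ZMod N}
    (hp : p.val < m) (hq : q.val < m) (h : m ∣ (p - q).val) : p = q := by
  have hcast : castHom hmN (ZMod m) p = castHom hmN (ZMod m) q := by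
    rw [← sub_eq_zero, ← map_sub, castHom_apply, ← natCast_val, natCast_eq_zero_iff]
    exact h
  have hval (x : ZMod N) (hx : x.val < m) : (castHom hmN (ZMod m) x).val = x.val := by
    rw [castHom_apply, ← natCast_val, val_cast_of_lt hx]
  exact val_injective N (by rw [← hval p hp, ← hval q hq, hcast])

lemma geom_sum_ne_zero_of_pow_eq_one_imp {K : Type*} [DivisionRing K] [CharZero K] {z : K}
    {c : ℕ} (hc : c ≠ 0) (h : z ^ c = 1 → z = 1) : ∑ i ∈ range c, z ^ i ≠ 0 := by
  by_cases hz : z = 1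
  · simp [hz, hc]
  · rw [geom_sum_eq hz c]
    exact div_ne_zero (sub_ne_zero.mpr (mt h hz)) (sub_ne_zero.mpr hz)

lemma IsPrimitiveRoot.geom_sum_pow_ne_zero {K : Type*} [Field K] [CharZero K] {ζ : K}
    {N c j : ℕ} (hζ : IsPrimitiveRoot ζ N) (hc : c ≠ 0) (h : N ∣ j * c → N ∣ j) :
    ∑ i ∈ range c, (ζ ^ j) ^ i ≠ 0 :=
  geom_sum_ne_zero_of_pow_eq_one_imp hc fun hz => by
    rw [← pow_mul, hζ.pow_eq_one_iff_dvd] at hz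
    exact (hζ.pow_eq_one_iff_dvd j).mpr (h hz)

lemma sum_zmod_ite_val_lt {M : Type*} [AddCommMonoid M] {N c : ℕ} [NeZero N] (hcN : c ≤ N)
    (f : ℕ → M) : ∑ x : ZMod N, (if x.val < c then f x.val else 0) = ∑ i ∈ range c, f i := by
  obtain ⟨n, rfl⟩ := Nat.exists_eq_succ_of_ne_zero (NeZero.ne N)
  refine (Fin.sum_univ_eq_sum_range (fun i => if i < c then f i else 0) (n + 1)).trans ?_
  rw [← sum_filter]
  congr 1
  ext i
  simp only [mem_filter, mem_range]
  omega

lemma exp_neg_two_pi_I_mul_div_eq_pow (N j x : ℕ) :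
    exp (-(2 * π * I) * (j * x / N)) = ((exp (2 * π * I / N))⁻¹ ^ j) ^ x := by
  rw [← exp_neg, ← exp_nat_mul, ← exp_nat_mul]
  ring_nf

lemma cubeFT_eq_mul_geom_sum {A B a b : ℕ} [NeZero A] [NeZero B] (haA : a ≤ A) (hbB : b ≤ B)
    (j : ZMod A) (k : ZMod B) :
    cubeFT A B a b j k =
      (∑ i ∈ range a, ((exp (2 * π * I / A))⁻¹ ^ j.val) ^ i) *
        ∑ i ∈ range b, ((exp (2 * π * I / B))⁻¹ ^ k.val) ^ i := by
  rw [← sum_zmod_ite_val_lt haA, ← sum_zmod_ite_val_lt hbB, sum_mul_sum, cubeFT]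
  refine sum_congr rfl fun x _ => sum_congr rfl fun y _ => ?_
  rw [mul_add, exp_add, exp_neg_two_pi_I_mul_div_eq_pow, exp_neg_two_pi_I_mul_div_eq_pow,
    boole_mul, ite_zero_mul_ite_zero]

lemma geom_sum_ne_zero_of_val_lt_div_gcd {N c : ℕ} [NeZero N] (hc : 0 < c) {p q : ZMod N}
    (hp : p.val < N / N.gcd c) (hq : q.val < N / N.gcd c) :
    ∑ i ∈ range c, ((exp (2 * π * I / N))⁻¹ ^ (p - q).val) ^ i ≠ 0 :=
  (isPrimitiveRoot_exp N (NeZero.ne N)).inv.geom_sum_pow_ne_zero hc.ne' fun h => by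
    have hpq := ZMod.eq_of_dvd_val_sub (Nat.div_dvd_of_dvd (Nat.gcd_dvd_left N c)) hp hq
      (Nat.div_gcd_dvd_of_dvd_mul (NeZero.ne N) h)
    rw [hpq, sub_self, ZMod.val_zero]
    exact dvd_zero N

/-- The zero set of the Fourier transform of `𝟙_{[a]×[b]}` does not meet `Q' − Q'`. -/
theorem zero_set_disjoint_from_difference_set (A B a b : ℕ) [NeZero A] [NeZero B]
    (ha : 0 < a) (hb : 0 < b) (haA : a ≤ A) (hbB : b ≤ B) :
    ∀ p ∈ Q' A B a b, ∀ q ∈ Q' A B a b,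
      cubeFT A B a b (p - q).1 (p - q).2 ≠ 0 := by
  intro p hp q hq
  simp only [Q', mem_filter, mem_univ, true_and] at hp hq
  rw [cubeFT_eq_mul_geom_sum haA hbB]
  exact mul_ne_zero (geom_sum_ne_zero_of_val_lt_div_gcd ha hp.1 hq.1)
    (geom_sum_ne_zero_of_val_lt_div_gcd hb hp.2 hq.2)
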